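/- arXiv:2002.01174 — 2 statements merged into one kernel-verified Lean document; each statement's English description precedes it below -/
import Mathlib

section
/- For every smooth vector field X : ℝ³ → ℝ³, H( L X ) = 0 identically on ℝ³, where H h = (1/8) rot₂( rot₂(rot₂ h) + L(div₂ h) ); that is, the flat linearised Cotton operator annihilates conformal Killing deformations. -/
open MeasureTheory
open scoped BigOperators

/-- Partial derivative in the `i`-th coordinate direction on `ℝ³`. -/
noncomputable def pd (i : Fin 3) (f : (Fin 3 → ℝ) → ℝ) : (Fin 3 → ℝ) → ℝ :=
  fun x => fderiv ℝ f x (Pi.single i 1)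

/-- The Levi-Civita symbol `ε_{ijk}` on three indices. -/
def eps : Fin 3 → Fin 3 → Fin 3 → ℝ := fun i j k =>
  if (i, j, k) = ((0 : Fin 3), (1 : Fin 3), (2 : Fin 3)) ∨
     (i, j, k) = ((1 : Fin 3), (2 : Fin 3), (0 : Fin 3)) ∨
     (i, j, k) = ((2 : Fin 3), (0 : Fin 3), (1 : Fin 3)) then 1
  else if (i, j, k) = ((2 : Fin 3), (1 : Fin 3), (0 : Fin 3)) ∨
     (i, j, k) = ((1 : Fin 3), (0 : Fin 3), (2 : Fin 3)) ∨
     (i, j, k) = ((0 : Fin 3), (2 : Fin 3), (1 : Fin 3)) then -1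
  else 0

/-- The Kronecker delta `δ_{ij}`. -/
def kdelta (i j : Fin 3) : ℝ := if i = j then 1 else 0

/-- Scalar fields on `ℝ³`. -/
abbrev Fld := (Fin 3 → ℝ) → ℝ

/-- Vector fields on `ℝ³`, given by their components. -/
abbrev VecFld := Fin 3 → Fld

/-- (Symmetric-)matrix fields on `ℝ³`, given by their components. -/
abbrev MatFld := Fin 3 → Fin 3 → Fld

/-- `(rot₁ X)_i = Σ_{j,k} ε_{ijk} ∂_j X_k`. -/
noncomputable def rot1 (X : VecFld) : VecFld := fun i x => ∑ j, ∑ k, eps i j k * pd j (X k) x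

/-- `div₁ X = Σ_i ∂_i X_i`. -/
noncomputable def div1 (X : VecFld) : Fld := fun x => ∑ i, pd i (X i) x

/-- `(div₂ h)_i = Σ_j ∂_j h_{ij}`. -/
noncomputable def div2 (h : MatFld) : VecFld := fun i x => ∑ j, pd j (h i j) x

/-- `(rot₂ h)_{ij} = Σ_{k,ℓ} ( ε_{kℓi} ∂_k h_{ℓj} + ε_{kℓj} ∂_k h_{ℓi} )`. -/
noncomputable def rot2 (h : MatFld) : MatFld :=
  fun i j x => ∑ k, ∑ l, (eps k l i * pd k (h l j) x + eps k l j * pd k (h l i) x)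

/-- The conformal Killing operator
`(L X)_{ij} = ∂_i X_j + ∂_j X_i − (2/3) δ_{ij} Σ_k ∂_k X_k`. -/
noncomputable def Lop (X : VecFld) : MatFld :=
  fun i j x => pd i (X j) x + pd j (X i) x - (2/3) * kdelta i j * div1 X x

/-- The flat-space linearised Cotton operator:
`H h = (1/8) rot₂( rot₂(rot₂ h) + L(div₂ h) )`. -/
noncomputable def Hop (h : MatFld) : MatFld := fun i j x =>
  (1/8) * rot2 (fun a b y => rot2 (rot2 h) a b y + Lop (div2 h) a b y) i j x



abbrev Sm (f : Fld) : Prop := ContDiff ℝ (⊤:ℕ∞) f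

lemma smDAt {f : Fld} (hf : Sm f) (x : Fin 3 → ℝ) : DifferentiableAt ℝ f x :=
  (hf.differentiable (by simp)) x

lemma pd_contDiff {f : Fld} (hf : Sm f) (i : Fin 3) : Sm (pd i f) :=
  (contDiff_infty_iff_fderiv.mp hf).2.clm_apply contDiff_const

lemma pd_comm {f : Fld} (hf : Sm f) (i j : Fin 3) :
    pd i (pd j f) = pd j (pd i f) := by
  funext x
  have hsymm : IsSymmSndFDerivAt ℝ f x :=
    (hf.contDiffAt).isSymmSndFDerivAt (by rw [minSmoothness_of_isRCLikeNormedField, show ((2 : WithTop ℕ∞)) = ((2:ℕ∞) : WithTop ℕ∞) by rfl]; exact WithTop.coe_le_coe.mpr le_top)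
  have hdf : ContDiff ℝ (⊤:ℕ∞) (fderiv ℝ f) := (contDiff_infty_iff_fderiv.mp hf).2
  have key : ∀ v : Fin 3 → ℝ, ∀ y, fderiv ℝ (fun z => fderiv ℝ f z v) y
      = (fderiv ℝ (fderiv ℝ f) y).flip v := by
    intro v y
    have h1 : DifferentiableAt ℝ (fderiv ℝ f) y := hdf.differentiable (by simp) y
    have := fderiv_clm_apply h1 (differentiableAt_const v)
    simp at this
    simpa using this
  unfold pd
  rw [key, key]
  exact hsymm _ _

lemma Sm_add {f g : Fld} (hf : Sm f) (hg : Sm g) : Sm (fun x => f x + g x) := hf.add hg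
lemma Sm_sub {f g : Fld} (hf : Sm f) (hg : Sm g) : Sm (fun x => f x - g x) := hf.sub hg
lemma Sm_cmul {f : Fld} (c : ℝ) (hf : Sm f) : Sm (fun x => c * f x) := contDiff_const.mul hf
lemma Sm_sum3 {g : Fin 3 → Fld} (hg : ∀ k, Sm (g k)) : Sm (fun x => ∑ k, g k x) := by
  apply ContDiff.sum (fun k _ => hg k)

-- pointwise push lemmas
lemma pd_addP {f g : Fld} (hf : Sm f) (hg : Sm g) (i : Fin 3) (x : Fin 3 → ℝ) :
    pd i (fun y => f y + g y) x = pd i f x + pd i g x := by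
  unfold pd; rw [fderiv_fun_add (smDAt hf x) (smDAt hg x)]; rfl

lemma pd_subP {f g : Fld} (hf : Sm f) (hg : Sm g) (i : Fin 3) (x : Fin 3 → ℝ) :
    pd i (fun y => f y - g y) x = pd i f x - pd i g x := by
  unfold pd; rw [fderiv_fun_sub (smDAt hf x) (smDAt hg x)]; rfl

lemma pd_cmulP {f : Fld} (c : ℝ) (hf : Sm f) (i : Fin 3) (x : Fin 3 → ℝ) :
    pd i (fun y => c * f y) x = c * pd i f x := by
  unfold pd; rw [fderiv_const_mul (smDAt hf x) c]; rfl

lemma pd_sum3P {g : Fin 3 → Fld} (hg : ∀ k, Sm (g k)) (i : Fin 3) (x : Fin 3 → ℝ) :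
    pd i (fun y => ∑ k, g k y) x = ∑ k, pd i (g k) x := by
  unfold pd; rw [fderiv_fun_sum (fun k _ => smDAt (hg k) x)]; rfl

-- iterate machinery
lemma Sm_iter {f : Fld} (hf : Sm f) (i : Fin 3) (n : ℕ) : Sm ((pd i)^[n] f) := by
  induction n generalizing f with
  | zero => exact hf
  | succ n ih => rw [Function.iterate_succ_apply]; exact ih (pd_contDiff hf i)

lemma pd_iter_comm {f : Fld} (hf : Sm f) (i j : Fin 3) (n : ℕ) :
    pd i ((pd j)^[n] f) = (pd j)^[n] (pd i f) := by
  induction n generalizing f with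
  | zero => rfl
  | succ n ih =>
    rw [Function.iterate_succ_apply, Function.iterate_succ_apply,
      ih (pd_contDiff hf j), pd_comm hf]

noncomputable def Dm (a b c : ℕ) (f : Fld) : Fld := (pd 0)^[a] ((pd 1)^[b] ((pd 2)^[c] f))

lemma pd0_Dm {f : Fld} {a b c : ℕ} : pd 0 (Dm a b c f) = Dm (a+1) b c f :=
  (Function.iterate_succ_apply' _ _ _).symm

lemma pd1_Dm {f : Fld} (hf : Sm f) {a b c : ℕ} : pd 1 (Dm a b c f) = Dm a (b+1) c f := by
  unfold Dm
  rw [pd_iter_comm (Sm_iter (Sm_iter hf 2 c) 1 b) 1 0 a,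
    ← Function.iterate_succ_apply' (pd 1)]

lemma pd2_Dm {f : Fld} (hf : Sm f) {a b c : ℕ} : pd 2 (Dm a b c f) = Dm a b (c+1) f := by
  unfold Dm
  rw [pd_iter_comm (Sm_iter (Sm_iter hf 2 c) 1 b) 2 0 a,
    pd_iter_comm (Sm_iter hf 2 c) 2 1 b,
    ← Function.iterate_succ_apply' (pd 2)]

-- shape pushers (function level)
lemma pd_push_sum3v (g : Fin 3 → Fld) (hg : ∀ k, Sm (g k)) (n : Fin 3) :
    pd n (fun x => ∑ k, g k x) = fun x => ∑ k, pd n (g k) x :=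
  funext fun x => pd_sum3P hg n x

lemma pd_push_sum33 (c1 c2 : Fin 3 → Fin 3 → ℝ) (g1 g2 : Fin 3 → Fin 3 → Fld)
    (h1 : ∀ k l, Sm (g1 k l)) (h2 : ∀ k l, Sm (g2 k l)) (n : Fin 3) :
    pd n (fun x => ∑ k, ∑ l, (c1 k l * g1 k l x + c2 k l * g2 k l x))
      = fun x => ∑ k, ∑ l, (c1 k l * pd n (g1 k l) x + c2 k l * pd n (g2 k l) x) := by
  have sInner : ∀ k l, Sm (fun y => c1 k l * g1 k l y + c2 k l * g2 k l y) :=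
    fun k l => Sm_add (Sm_cmul _ (h1 k l)) (Sm_cmul _ (h2 k l))
  have sRow : ∀ k, Sm (fun y => ∑ l, (c1 k l * g1 k l y + c2 k l * g2 k l y)) :=
    fun k => Sm_sum3 (sInner k)
  funext x
  rw [pd_sum3P (g := fun k y => ∑ l, (c1 k l * g1 k l y + c2 k l * g2 k l y)) sRow]
  refine Finset.sum_congr rfl fun k _ => ?_
  rw [pd_sum3P (g := fun l y => c1 k l * g1 k l y + c2 k l * g2 k l y) (sInner k)]
  refine Finset.sum_congr rfl fun l _ => ?_
  rw [pd_addP (Sm_cmul _ (h1 k l)) (Sm_cmul _ (h2 k l)),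
    pd_cmulP _ (h1 k l), pd_cmulP _ (h2 k l)]

lemma pd_push_lopshape (u v : Fld) (c : ℝ) (w : Fin 3 → Fld)
    (hu : Sm u) (hv : Sm v) (hw : ∀ k, Sm (w k)) (n : Fin 3) :
    pd n (fun x => u x + v x - c * ∑ k, w k x)
      = fun x => pd n u x + pd n v x - c * ∑ k, pd n (w k) x := by
  funext x
  rw [pd_subP (Sm_add hu hv) (Sm_cmul c (Sm_sum3 hw)) n x,
    pd_addP hu hv, pd_cmulP c (Sm_sum3 hw), pd_sum3P hw]



-- smoothness closure for operators
lemma Sm_Lop {V : VecFld} (hs : ∀ a, Sm (V a)) (i j : Fin 3) : Sm (Lop V i j) := by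
  show Sm (fun x => pd i (V j) x + pd j (V i) x - (2/3) * kdelta i j * ∑ k, pd k (V k) x)
  exact Sm_sub (Sm_add (pd_contDiff (hs j) i) (pd_contDiff (hs i) j))
    (Sm_cmul _ (Sm_sum3 (fun k => pd_contDiff (hs k) k)))

lemma Sm_rot2 {h : MatFld} (hs : ∀ a b, Sm (h a b)) (i j : Fin 3) : Sm (rot2 h i j) := by
  show Sm (fun x => ∑ k, ∑ l, (eps k l i * pd k (h l j) x + eps k l j * pd k (h l i) x))
  exact Sm_sum3 fun k => Sm_sum3 fun l =>
    Sm_add (Sm_cmul _ (pd_contDiff (hs l j) k)) (Sm_cmul _ (pd_contDiff (hs l i) k))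

lemma Sm_div2 {h : MatFld} (hs : ∀ a b, Sm (h a b)) (i : Fin 3) : Sm (div2 h i) := by
  show Sm (fun x => ∑ k, pd k (h i k) x)
  exact Sm_sum3 fun k => pd_contDiff (hs i k) k

-- operator pushers
lemma pd_push_rot2 {h : MatFld} (hs : ∀ a b, Sm (h a b)) (m i j : Fin 3) :
    pd m (rot2 h i j) = fun x => ∑ k, ∑ l,
      (eps k l i * pd m (pd k (h l j)) x + eps k l j * pd m (pd k (h l i)) x) := by
  show pd m (fun x => ∑ k, ∑ l, (eps k l i * pd k (h l j) x + eps k l j * pd k (h l i) x)) = _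
  exact pd_push_sum33 (fun k l => eps k l i) (fun k l => eps k l j)
    (fun k l => pd k (h l j)) (fun k l => pd k (h l i))
    (fun k l => pd_contDiff (hs l j) k) (fun k l => pd_contDiff (hs l i) k) m

lemma pd_push_div2 {h : MatFld} (hs : ∀ a b, Sm (h a b)) (m i : Fin 3) :
    pd m (div2 h i) = fun x => ∑ k, pd m (pd k (h i k)) x := by
  show pd m (fun x => ∑ k, pd k (h i k) x) = _
  exact pd_push_sum3v (fun k => pd k (h i k)) (fun k => pd_contDiff (hs i k) k) m

lemma pd_push_Lop {V : VecFld} (hs : ∀ a, Sm (V a)) (m i j : Fin 3) :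
    pd m (Lop V i j) = fun x => pd m (pd i (V j)) x + pd m (pd j (V i)) x
      - (2/3) * kdelta i j * ∑ k, pd m (pd k (V k)) x := by
  show pd m (fun x => pd i (V j) x + pd j (V i) x
      - (2/3) * kdelta i j * ∑ k, pd k (V k) x) = _
  exact pd_push_lopshape (pd i (V j)) (pd j (V i)) _ (fun k => pd k (V k))
    (pd_contDiff (hs j) i) (pd_contDiff (hs i) j) (fun k => pd_contDiff (hs k) k) m
lemma eps_000 : eps 0 0 0 = 0 := rfl
lemma eps_001 : eps 0 0 1 = 0 := rfl
lemma eps_002 : eps 0 0 2 = 0 := rfl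
lemma eps_010 : eps 0 1 0 = 0 := rfl
lemma eps_011 : eps 0 1 1 = 0 := rfl
lemma eps_012 : eps 0 1 2 = 1 := rfl
lemma eps_020 : eps 0 2 0 = 0 := rfl
lemma eps_021 : eps 0 2 1 = -1 := rfl
lemma eps_022 : eps 0 2 2 = 0 := rfl
lemma eps_100 : eps 1 0 0 = 0 := rfl
lemma eps_101 : eps 1 0 1 = 0 := rfl
lemma eps_102 : eps 1 0 2 = -1 := rfl
lemma eps_110 : eps 1 1 0 = 0 := rfl
lemma eps_111 : eps 1 1 1 = 0 := rfl
lemma eps_112 : eps 1 1 2 = 0 := rfl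
lemma eps_120 : eps 1 2 0 = 1 := rfl
lemma eps_121 : eps 1 2 1 = 0 := rfl
lemma eps_122 : eps 1 2 2 = 0 := rfl
lemma eps_200 : eps 2 0 0 = 0 := rfl
lemma eps_201 : eps 2 0 1 = 1 := rfl
lemma eps_202 : eps 2 0 2 = 0 := rfl
lemma eps_210 : eps 2 1 0 = -1 := rfl
lemma eps_211 : eps 2 1 1 = 0 := rfl
lemma eps_212 : eps 2 1 2 = 0 := rfl
lemma eps_220 : eps 2 2 0 = 0 := rfl
lemma eps_221 : eps 2 2 1 = 0 := rfl
lemma eps_222 : eps 2 2 2 = 0 := rfl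
lemma kd_00 : kdelta 0 0 = 1 := rfl
lemma kd_01 : kdelta 0 1 = 0 := rfl
lemma kd_02 : kdelta 0 2 = 0 := rfl
lemma kd_10 : kdelta 1 0 = 0 := rfl
lemma kd_11 : kdelta 1 1 = 1 := rfl
lemma kd_12 : kdelta 1 2 = 0 := rfl
lemma kd_20 : kdelta 2 0 = 0 := rfl
lemma kd_21 : kdelta 2 1 = 0 := rfl
lemma kd_22 : kdelta 2 2 = 1 := rfl
lemma fin3cases (i : Fin 3) : i = 0 ∨ i = 1 ∨ i = 2 := by omega


set_option maxHeartbeats 4000000 in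
/-- `H( L X ) = 0` for every smooth vector field `X`, i.e. the flat
linearised Cotton operator annihilates conformal Killing deformations. -/
theorem stmt7 (X : VecFld)
    (hX_smooth : ∀ i, ContDiff ℝ (⊤ : ℕ∞) (X i)) :
    ∀ (i j : Fin 3) (x : Fin 3 → ℝ), Hop (Lop X) i j x = 0 := by
  have s0 : ∀ m, Sm (X m) := fun m => (hX_smooth m).of_le (by simp)
  have s1 : ∀ a b, Sm (Lop X a b) := Sm_Lop s0
  have s2 : ∀ a b, Sm (rot2 (Lop X) a b) := Sm_rot2 s1
  have s3 : ∀ a b, Sm (rot2 (rot2 (Lop X)) a b) := Sm_rot2 s2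
  have s4 : ∀ a, Sm (div2 (Lop X) a) := Sm_div2 s1
  have s5 : ∀ a b, Sm (Lop (div2 (Lop X)) a b) := Sm_Lop s4
  have hA : ∀ (k l j : Fin 3) (x : Fin 3 → ℝ),
      pd k (fun y => rot2 (rot2 (Lop X)) l j y + Lop (div2 (Lop X)) l j y) x
        = pd k (rot2 (rot2 (Lop X)) l j) x + pd k (Lop (div2 (Lop X)) l j) x :=
    fun k l j x => pd_addP (s3 l j) (s5 l j) k x
  have hB : ∀ k l j : Fin 3, pd k (rot2 (rot2 (Lop X)) l j) = fun x => ∑ p, ∑ q,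
      (eps p q l * pd k (pd p (rot2 (Lop X) q j)) x
        + eps p q j * pd k (pd p (rot2 (Lop X) q l)) x) :=
    fun k l j => pd_push_rot2 s2 k l j
  have hC : ∀ k p q j : Fin 3, pd k (pd p (rot2 (Lop X) q j)) = fun x => ∑ r, ∑ s,
      (eps r s q * pd k (pd p (pd r (Lop X s j))) x
        + eps r s j * pd k (pd p (pd r (Lop X s q))) x) := by
    intro k p q j
    rw [pd_push_rot2 s1 p q j]
    exact pd_push_sum33 (fun r s => eps r s q) (fun r s => eps r s j)
      (fun r s => pd p (pd r (Lop X s j))) (fun r s => pd p (pd r (Lop X s q)))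
      (fun r s => pd_contDiff (pd_contDiff (s1 s j) r) p)
      (fun r s => pd_contDiff (pd_contDiff (s1 s q) r) p) k
  have hE : ∀ k l j : Fin 3, pd k (Lop (div2 (Lop X)) l j) = fun x =>
      pd k (pd l (div2 (Lop X) j)) x + pd k (pd j (div2 (Lop X) l)) x
        - (2/3) * kdelta l j * ∑ m, pd k (pd m (div2 (Lop X) m)) x :=
    fun k l j => pd_push_Lop s4 k l j
  have hF : ∀ k m a : Fin 3, pd k (pd m (div2 (Lop X) a))
      = fun x => ∑ b, pd k (pd m (pd b (Lop X a b))) x := by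
    intro k m a
    rw [pd_push_div2 s1 m a]
    exact pd_push_sum3v (fun b => pd m (pd b (Lop X a b)))
      (fun b => pd_contDiff (pd_contDiff (s1 a b) b) m) k
  have hD : ∀ k p r s j : Fin 3, pd k (pd p (pd r (Lop X s j))) = fun x =>
      pd k (pd p (pd r (pd s (X j)))) x + pd k (pd p (pd r (pd j (X s)))) x
        - (2/3) * kdelta s j * ∑ m, pd k (pd p (pd r (pd m (X m)))) x := by
    intro k p r s j
    rw [pd_push_Lop s0 r s j]
    rw [pd_push_lopshape (pd r (pd s (X j))) (pd r (pd j (X s))) _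
      (fun m => pd r (pd m (X m)))
      (pd_contDiff (pd_contDiff (s0 j) s) r) (pd_contDiff (pd_contDiff (s0 s) j) r)
      (fun m => pd_contDiff (pd_contDiff (s0 m) m) r) p]
    rw [pd_push_lopshape (pd p (pd r (pd s (X j)))) (pd p (pd r (pd j (X s)))) _
      (fun m => pd p (pd r (pd m (X m))))
      (pd_contDiff (pd_contDiff (pd_contDiff (s0 j) s) r) p)
      (pd_contDiff (pd_contDiff (pd_contDiff (s0 s) j) r) p)
      (fun m => pd_contDiff (pd_contDiff (pd_contDiff (s0 m) m) r) p) k]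
  have hb0 : ∀ m : Fin 3, pd 0 (X m) = Dm 1 0 0 (X m) := fun m => pd0_Dm (f := X m) (a := 0) (b := 0) (c := 0)
  have hb1 : ∀ m : Fin 3, pd 1 (X m) = Dm 0 1 0 (X m) := fun m => pd1_Dm (s0 m) (a := 0) (b := 0) (c := 0)
  have hb2 : ∀ m : Fin 3, pd 2 (X m) = Dm 0 0 1 (X m) := fun m => pd2_Dm (s0 m) (a := 0) (b := 0) (c := 0)
  have hp0 : ∀ (a b c : ℕ) (m : Fin 3), pd 0 (Dm a b c (X m)) = Dm (a+1) b c (X m) :=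
    fun a b c m => pd0_Dm
  have hp1 : ∀ (a b c : ℕ) (m : Fin 3), pd 1 (Dm a b c (X m)) = Dm a (b+1) c (X m) :=
    fun a b c m => pd1_Dm (s0 m)
  have hp2 : ∀ (a b c : ℕ) (m : Fin 3), pd 2 (Dm a b c (X m)) = Dm a b (c+1) (X m) :=
    fun a b c m => pd2_Dm (s0 m)
  intro i j x
  have goal_eq : Hop (Lop X) i j x = (1/8) * (∑ k, ∑ l,
      (eps k l i * pd k (fun y => rot2 (rot2 (Lop X)) l j y + Lop (div2 (Lop X)) l j y) x
       + eps k l j * pd k (fun y => rot2 (rot2 (Lop X)) l i y + Lop (div2 (Lop X)) l i y) x)) := rfl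
  rw [goal_eq]
  rcases fin3cases i with rfl|rfl|rfl <;> rcases fin3cases j with rfl|rfl|rfl
  all_goals (
      try simp only [Fin.sum_univ_three]
      try simp only [eps_000, eps_001, eps_002, eps_010, eps_011, eps_012, eps_020, eps_021, eps_022, eps_100, eps_101, eps_102, eps_110, eps_111, eps_112, eps_120, eps_121, eps_122, eps_200, eps_201, eps_202, eps_210, eps_211, eps_212, eps_220, eps_221, eps_222, kd_00, kd_01, kd_02, kd_10, kd_11, kd_12, kd_20, kd_21, kd_22, Fin.isValue, mul_zero, zero_mul, mul_one, one_mul, add_zero, zero_add, sub_zero, zero_sub, neg_zero, neg_neg, neg_mul, mul_neg]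
      try simp only [hA]
      try simp only [hB]
      try simp only [Fin.sum_univ_three]
      try simp only [eps_000, eps_001, eps_002, eps_010, eps_011, eps_012, eps_020, eps_021, eps_022, eps_100, eps_101, eps_102, eps_110, eps_111, eps_112, eps_120, eps_121, eps_122, eps_200, eps_201, eps_202, eps_210, eps_211, eps_212, eps_220, eps_221, eps_222, kd_00, kd_01, kd_02, kd_10, kd_11, kd_12, kd_20, kd_21, kd_22, Fin.isValue, mul_zero, zero_mul, mul_one, one_mul, add_zero, zero_add, sub_zero, zero_sub, neg_zero, neg_neg, neg_mul, mul_neg]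
      try simp only [hC]
      try simp only [Fin.sum_univ_three]
      try simp only [eps_000, eps_001, eps_002, eps_010, eps_011, eps_012, eps_020, eps_021, eps_022, eps_100, eps_101, eps_102, eps_110, eps_111, eps_112, eps_120, eps_121, eps_122, eps_200, eps_201, eps_202, eps_210, eps_211, eps_212, eps_220, eps_221, eps_222, kd_00, kd_01, kd_02, kd_10, kd_11, kd_12, kd_20, kd_21, kd_22, Fin.isValue, mul_zero, zero_mul, mul_one, one_mul, add_zero, zero_add, sub_zero, zero_sub, neg_zero, neg_neg, neg_mul, mul_neg]
      try simp only [hE]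
      try simp only [hF]
      try simp only [Fin.sum_univ_three]
      try simp only [eps_000, eps_001, eps_002, eps_010, eps_011, eps_012, eps_020, eps_021, eps_022, eps_100, eps_101, eps_102, eps_110, eps_111, eps_112, eps_120, eps_121, eps_122, eps_200, eps_201, eps_202, eps_210, eps_211, eps_212, eps_220, eps_221, eps_222, kd_00, kd_01, kd_02, kd_10, kd_11, kd_12, kd_20, kd_21, kd_22, Fin.isValue, mul_zero, zero_mul, mul_one, one_mul, add_zero, zero_add, sub_zero, zero_sub, neg_zero, neg_neg, neg_mul, mul_neg]
      try simp only [hD]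
      try simp only [Fin.sum_univ_three]
      try simp only [eps_000, eps_001, eps_002, eps_010, eps_011, eps_012, eps_020, eps_021, eps_022, eps_100, eps_101, eps_102, eps_110, eps_111, eps_112, eps_120, eps_121, eps_122, eps_200, eps_201, eps_202, eps_210, eps_211, eps_212, eps_220, eps_221, eps_222, kd_00, kd_01, kd_02, kd_10, kd_11, kd_12, kd_20, kd_21, kd_22, Fin.isValue, mul_zero, zero_mul, mul_one, one_mul, add_zero, zero_add, sub_zero, zero_sub, neg_zero, neg_neg, neg_mul, mul_neg]
      try simp only [hb0, hb1, hb2, hp0, hp1, hp2, Nat.reduceAdd]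
      ring)
end

section
/- For every k ∈ ℝ³ and every real symmetric 3×3 matrix h, the square of the symbol of rot₂ is given by: (σ_k(rot₂)(σ_k(rot₂)(h)))_{ij} = 3 Σ_ℓ k_ℓ ( k_i h_{jℓ} + k_j h_{iℓ} ) − 4 |k|² h_{ij} + 2 ( (|k|² δ_{ij} − k_i k_j) tr h − (Σ_{ℓ,m} k_ℓ k_m h_{ℓm}) δ_{ij} ). -/
/-!
Let `K` be the matrix of `v ↦ k × v`. The symbol is `σ(h) = K h + (K h)ᵀ`, which for symmetric
`h` is the commutator `K h - h K`; since `σ(h)` is again symmetric,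
`σ²(h) = [K, [K, h]] = K² h - 2 K h K + h K²`. In dimension three `K² = k kᵀ - |k|² I`,
and for symmetric `h`
`K h K = |k|² h - k (h k)ᵀ - (h k) kᵀ - (tr h) (|k|² I - k kᵀ) + (kᵀ h k) I`.
Substituting both gives the formula.
-/
open scoped BigOperators

/-- The cross product on `ℝ³`: `(a × b)_i = Σ_{j,l} ε_{ijl} a_j b_l`. -/
def cross (a b : Fin 3 → ℝ) : Fin 3 → ℝ := fun i => ∑ j, ∑ l, eps i j l * a j * b l

/-- The symbol of `rot₂`:
`(σ_k(rot₂)(h))_{ij} = Σ_{ℓ,m} ( ε_{iℓm} k_ℓ h_{mj} + ε_{jℓm} k_ℓ h_{mi} )`. -/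
def sigRot2 (k : Fin 3 → ℝ) (h : Fin 3 → Fin 3 → ℝ) : Fin 3 → Fin 3 → ℝ :=
  fun i j => ∑ l, ∑ m, (eps i l m * k l * h m j + eps j l m * k l * h m i)

open Matrix

section CrossMatrix

variable {R : Type*} [CommRing R]

def crossMatrix (k : Fin 3 → R) : Matrix (Fin 3) (Fin 3) R :=
  !![0, -k 2, k 1; k 2, 0, -k 0; -k 1, k 0, 0]

theorem crossMatrix_mulVec (k v : Fin 3 → R) : crossMatrix k *ᵥ v = k ⨯₃ v := by
  ext i
  fin_cases i <;> simp [crossMatrix, cross_apply, mulVec, dotProduct, Fin.sum_univ_three] <;> ring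

theorem crossMatrix_transpose (k : Fin 3 → R) : (crossMatrix k)ᵀ = -crossMatrix k := by
  ext i j; fin_cases i <;> fin_cases j <;> simp [crossMatrix]

theorem crossMatrix_mul_self (k : Fin 3 → R) :
    crossMatrix k * crossMatrix k = vecMulVec k k - (k ⬝ᵥ k) • 1 := by
  ext i j; fin_cases i <;> fin_cases j <;>
    simp [crossMatrix, vecMulVec_apply, dotProduct, Fin.sum_univ_three, Matrix.mul_apply] <;> ring

theorem crossMatrix_mul_mul_crossMatrix {h : Matrix (Fin 3) (Fin 3) R} (hh : h.IsSymm)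
    (k : Fin 3 → R) :
    crossMatrix k * h * crossMatrix k =
      (k ⬝ᵥ k) • h - vecMulVec k (h *ᵥ k) - vecMulVec (h *ᵥ k) k
        - h.trace • ((k ⬝ᵥ k) • 1 - vecMulVec k k) + (k ⬝ᵥ h *ᵥ k) • 1 := by
  have h10 : h 1 0 = h 0 1 := hh.apply 0 1
  have h20 : h 2 0 = h 0 2 := hh.apply 0 2
  have h21 : h 2 1 = h 1 2 := hh.apply 1 2
  ext i j; fin_cases i <;> fin_cases j <;>
    simp [crossMatrix, vecMulVec_apply, dotProduct, mulVec, vecMul, trace, Fin.sum_univ_three,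
      Matrix.mul_apply, h10, h20, h21] <;> ring

end CrossMatrix

theorem cross_eq_crossProduct (a b : Fin 3 → ℝ) : cross a b = a ⨯₃ b := by
  ext i; fin_cases i <;> simp [cross, eps, cross_apply, Fin.sum_univ_three] <;> ring

theorem sigRot2_eq_crossMatrix_mul_add_transpose (k : Fin 3 → ℝ)
    (h : Matrix (Fin 3) (Fin 3) ℝ) :
    sigRot2 k h = (crossMatrix k * h + (crossMatrix k * h)ᵀ : Matrix (Fin 3) (Fin 3) ℝ) := by
  have hcol (i j : Fin 3) : cross k (fun m => h m j) i = (crossMatrix k * h) i j := by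
    rw [cross_eq_crossProduct, ← crossMatrix_mulVec]; rfl
  ext i j
  rw [Matrix.add_apply, transpose_apply, ← hcol, ← hcol]
  simp only [sigRot2, cross, ← Finset.sum_add_distrib]

theorem sigRot2_eq_commutator_of_isSymm (k : Fin 3 → ℝ) {h : Matrix (Fin 3) (Fin 3) ℝ}
    (hh : h.IsSymm) :
    sigRot2 k h = (crossMatrix k * h - h * crossMatrix k : Matrix (Fin 3) (Fin 3) ℝ) := by
  rw [sigRot2_eq_crossMatrix_mul_add_transpose, transpose_mul, hh.eq, crossMatrix_transpose,
    mul_neg, sub_eq_add_neg]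

theorem sigRot2_sigRot2_eq_double_commutator_of_isSymm (k : Fin 3 → ℝ)
    {h : Matrix (Fin 3) (Fin 3) ℝ} (hh : h.IsSymm) :
    sigRot2 k (sigRot2 k h) = (crossMatrix k * crossMatrix k * h
      - 2 • (crossMatrix k * h * crossMatrix k) + h * (crossMatrix k * crossMatrix k) :
        Matrix (Fin 3) (Fin 3) ℝ) := by
  have hσ : IsSymm (sigRot2 k h : Matrix (Fin 3) (Fin 3) ℝ) := by
    rw [sigRot2_eq_crossMatrix_mul_add_transpose]; exact isSymm_add_transpose_self _
  rw [sigRot2_eq_commutator_of_isSymm k hσ, sigRot2_eq_commutator_of_isSymm k hh]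
  noncomm_ring

theorem sigRot2_sigRot2_of_isSymm (k : Fin 3 → ℝ) {h : Matrix (Fin 3) (Fin 3) ℝ}
    (hh : h.IsSymm) :
    sigRot2 k (sigRot2 k h) = ((3 : ℝ) • (vecMulVec k (h *ᵥ k) + vecMulVec (h *ᵥ k) k)
      - (4 * (k ⬝ᵥ k)) • h
      + (2 : ℝ) • (h.trace • ((k ⬝ᵥ k) • 1 - vecMulVec k k) - (k ⬝ᵥ h *ᵥ k) • 1) :
        Matrix (Fin 3) (Fin 3) ℝ) := by
  have hk : k ᵥ* h = h *ᵥ k := by rw [← vecMul_transpose, hh.eq]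
  rw [sigRot2_sigRot2_eq_double_commutator_of_isSymm k hh, crossMatrix_mul_self,
    crossMatrix_mul_mul_crossMatrix hh]
  simp only [sub_mul, mul_sub, smul_mul, mul_smul, Matrix.mul_smul, Matrix.mul_one,
    Matrix.one_mul, vecMulVec_mul, mul_vecMulVec, hk]
  -- `sigRot2` is function-valued, so the equation must be moved into the matrix module first.
  change @Eq (Matrix (Fin 3) (Fin 3) ℝ) _ _
  module

/-- for every `k ∈ ℝ³` and every symmetric `h`, the square of the symbol
of `rot₂` is
`(σ_k(rot₂)²(h))_{ij} = 3 Σ_ℓ k_ℓ ( k_i h_{jℓ} + k_j h_{iℓ} ) − 4 |k|² h_{ij}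
  + 2 ( (|k|² δ_{ij} − k_i k_j) tr h − (Σ_{ℓ,m} k_ℓ k_m h_{ℓm}) δ_{ij} )`. -/
theorem stmt19 (k : Fin 3 → ℝ) (h : Fin 3 → Fin 3 → ℝ)
    (h_symm : ∀ i j, h i j = h j i) :
    ∀ i j, sigRot2 k (sigRot2 k h) i j =
      3 * (∑ l, k l * (k i * h j l + k j * h i l))
      - 4 * (∑ l, k l ^ 2) * h i j
      + 2 * (((∑ l, k l ^ 2) * kdelta i j - k i * k j) * (∑ l, h l l)
             - (∑ l, ∑ m, k l * k m * h l m) * kdelta i j) := by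
  intro i j
  -- retype `h` as a matrix so that the `Matrix` simp lemmas apply to it
  obtain ⟨H, rfl⟩ : ∃ H : Matrix (Fin 3) (Fin 3) ℝ, H = h := ⟨h, rfl⟩
  have hH : H.IsSymm := IsSymm.ext fun i j => h_symm j i
  have hsum :
      ∑ l, k l * (k i * H j l + k j * H i l) = k i * (H *ᵥ k) j + k j * (H *ᵥ k) i := by
    simp only [mulVec, dotProduct, Finset.mul_sum, ← Finset.sum_add_distrib]
    exact Finset.sum_congr rfl fun l _ => by ring
  have hnorm : ∑ l, k l ^ 2 = k ⬝ᵥ k := by simp only [dotProduct, sq]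
  have hquad : ∑ l, ∑ m, k l * k m * H l m = k ⬝ᵥ H *ᵥ k := by
    simp only [dotProduct, mulVec, Finset.mul_sum]
    exact Finset.sum_congr rfl fun l _ => Finset.sum_congr rfl fun m _ => by ring
  have htr : ∑ l, H l l = H.trace := rfl
  have hδ : kdelta i j = (1 : Matrix (Fin 3) (Fin 3) ℝ) i j := by simp [kdelta, one_apply]
  rw [sigRot2_sigRot2_of_isSymm k hH, hsum, hnorm, hquad, htr, hδ]
  simp only [Matrix.sub_apply, Matrix.add_apply, Matrix.smul_apply, vecMulVec_apply, smul_eq_mul]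
  ring
end
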